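/- arXiv:2605.26849 — 6 statements merged into one kernel-verified Lean document; each statement's English description precedes it below -/
import Mathlib

section
/- Let M ≥ 1 and B be natural numbers, let p*, p̂ ∈ [0,1]^M. Suppose N̂ is an allocation feasible for budget B that maximizes J(·; p̂) over all allocations feasible for budget B, and N* is an allocation feasible for budget B that maximizes J(·; p*) over all allocations feasible for budget B. Then J(N*; p*) - J(N̂; p*) ≤ 2B · max_{1 ≤ i ≤ M} |p̂_i - p*_i|. -/
open Finset

/-- Coverage objective `J(N; p) = Σ_i [1 - (1 - p_i)^{N_i}]`. -/
noncomputable def coverJ {M : ℕ} (N : Fin M → ℕ) (p : Fin M → ℝ) : ℝ :=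
  ∑ i, (1 - (1 - p i) ^ N i)

lemma abs_pow_sub_pow_le_aux (a b : ℝ) (ha0 : 0 ≤ a) (ha1 : a ≤ 1)
    (hb0 : 0 ≤ b) (hb1 : b ≤ 1) (n : ℕ) : |a ^ n - b ^ n| ≤ n * |a - b| := by
  induction n with
  | zero => simp
  | succ n ih =>
    have key : a ^ (n + 1) - b ^ (n + 1) = a * (a ^ n - b ^ n) + b ^ n * (a - b) := by ring
    have h1 : |a * (a ^ n - b ^ n)| ≤ n * |a - b| := by
      rw [abs_mul, abs_of_nonneg ha0]
      calc a * |a ^ n - b ^ n| ≤ 1 * |a ^ n - b ^ n| :=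
            mul_le_mul_of_nonneg_right ha1 (abs_nonneg _)
        _ = |a ^ n - b ^ n| := one_mul _
        _ ≤ n * |a - b| := ih
    have h2 : |b ^ n * (a - b)| ≤ |a - b| := by
      rw [abs_mul, abs_of_nonneg (pow_nonneg hb0 n)]
      calc b ^ n * |a - b| ≤ 1 * |a - b| :=
            mul_le_mul_of_nonneg_right (pow_le_one₀ hb0 hb1) (abs_nonneg _)
        _ = |a - b| := one_mul _
    calc |a ^ (n + 1) - b ^ (n + 1)| ≤ |a * (a ^ n - b ^ n)| + |b ^ n * (a - b)| := by
          rw [key]; exact abs_add_le _ _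
      _ ≤ n * |a - b| + |a - b| := add_le_add h1 h2
      _ = (n + 1 : ℕ) * |a - b| := by push_cast; ring

lemma coverJ_lipschitz {M : ℕ} (N : Fin M → ℕ) (p q : Fin M → ℝ)
    (hp0 : ∀ i, 0 ≤ p i) (hp1 : ∀ i, p i ≤ 1)
    (hq0 : ∀ i, 0 ≤ q i) (hq1 : ∀ i, q i ≤ 1)
    (ε : ℝ) (hε : ∀ i, |p i - q i| ≤ ε) (hε0 : 0 ≤ ε) :
    coverJ N p - coverJ N q ≤ (∑ i, N i : ℕ) * ε := by
  unfold coverJ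
  rw [← Finset.sum_sub_distrib]
  push_cast
  rw [Finset.sum_mul]
  apply Finset.sum_le_sum
  intro i _
  have h := abs_pow_sub_pow_le_aux (1 - q i) (1 - p i) (by linarith [hq1 i])
    (by linarith [hq0 i]) (by linarith [hp1 i]) (by linarith [hp0 i]) (N i)
  rw [show 1 - q i - (1 - p i) = p i - q i from by ring] at h
  have h2 : (1 - q i) ^ N i - (1 - p i) ^ N i ≤ (N i) * |p i - q i| :=
    le_trans (le_abs_self _) h
  have h3 : (N i : ℝ) * |p i - q i| ≤ (N i) * ε :=
    mul_le_mul_of_nonneg_left (hε i) (Nat.cast_nonneg _)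
  nlinarith [h2, h3]

/-- If `N̂` maximizes `J(·; p̂)` and `N*` maximizes `J(·; p*)` over allocations with
total budget `B`, then `J(N*; p*) - J(N̂; p*) ≤ 2B · max_i |p̂_i - p*_i|`. -/
theorem coverJ_greedy_sensitivity (M B : ℕ) (hM : 1 ≤ M)
    (pstar phat : Fin M → ℝ)
    (hps0 : ∀ i, 0 ≤ pstar i) (hps1 : ∀ i, pstar i ≤ 1)
    (hph0 : ∀ i, 0 ≤ phat i) (hph1 : ∀ i, phat i ≤ 1)
    (Nhat Nstar : Fin M → ℕ)
    (hNhatB : ∑ i, Nhat i = B)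
    (hNstarB : ∑ i, Nstar i = B)
    (hNhatOpt : ∀ N : Fin M → ℕ, ∑ i, N i = B → coverJ N phat ≤ coverJ Nhat phat)
    (hNstarOpt : ∀ N : Fin M → ℕ, ∑ i, N i = B → coverJ N pstar ≤ coverJ Nstar pstar) :
    coverJ Nstar pstar - coverJ Nhat pstar ≤
      2 * (B : ℝ) * (Finset.univ.sup' ⟨⟨0, hM⟩, Finset.mem_univ _⟩
        fun i => |phat i - pstar i|) := by
  set ε := Finset.univ.sup' ⟨⟨0, hM⟩, Finset.mem_univ _⟩ fun i => |phat i - pstar i| with hεdef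
  have hε : ∀ i, |phat i - pstar i| ≤ ε := fun i =>
    Finset.le_sup' (fun i => |phat i - pstar i|) (Finset.mem_univ i)
  have hε0 : 0 ≤ ε := le_trans (abs_nonneg _) (hε ⟨0, hM⟩)
  have hε' : ∀ i, |pstar i - phat i| ≤ ε := fun i => by
    rw [abs_sub_comm]; exact hε i
  have h1 : coverJ Nstar pstar - coverJ Nstar phat ≤ (B : ℝ) * ε := by
    have := coverJ_lipschitz Nstar pstar phat hps0 hps1 hph0 hph1 ε hε' hε0
    rwa [hNstarB] at this
  have h2 : coverJ Nstar phat ≤ coverJ Nhat phat := hNhatOpt Nstar hNstarB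
  have h3 : coverJ Nhat phat - coverJ Nhat pstar ≤ (B : ℝ) * ε := by
    have := coverJ_lipschitz Nhat phat pstar hph0 hph1 hps0 hps1 ε hε hε0
    rwa [hNhatB] at this
  linarith
end

section
/- Let M ≥ 2, let p ∈ [0,1]^M, and let N* = (N*_1, …, N*_M) be an allocation of natural numbers. Suppose there exist distinct indices i ≠ j with N*_j ≥ 1. Define the swapped allocation Ñ by Ñ_i = N*_i + 1, Ñ_j = N*_j - 1, and Ñ_k = N*_k for k ∉ {i, j}. Then J(Ñ; p) - J(N*; p) = Δ(p_i, N*_i) - Δ(p_j, N*_j - 1), where Δ(p, n) = p·(1-p)^n. In particular, if Δ(p_i, N*_i) > Δ(p_j, N*_j - 1), the swapped allocation is feasible for the same budget and strictly increases the coverage objective, so N* does not maximize J(·; p) among allocations with the same total. -/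
open Finset

/-- Exchange identity: moving one sample from question `j` (with `N*_j ≥ 1`)
to question `i ≠ j` changes the coverage objective by exactly
`Δ(p_i, N*_i) - Δ(p_j, N*_j - 1)`; if this difference is positive, the swapped
allocation has the same total budget and strictly larger objective, so `N*`
is not a maximizer among allocations with the same total. -/
theorem coverJ_exchange (M : ℕ) (hM : 2 ≤ M)
    (p : Fin M → ℝ) (hp0 : ∀ i, 0 ≤ p i) (hp1 : ∀ i, p i ≤ 1)
    (Nstar : Fin M → ℕ) (i j : Fin M) (hij : i ≠ j) (hNj : 1 ≤ Nstar j)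
    (Ntilde : Fin M → ℕ)
    (hNtilde : Ntilde = fun k =>
      if k = i then Nstar i + 1 else if k = j then Nstar j - 1 else Nstar k) :
    coverJ Ntilde p - coverJ Nstar p =
      p i * (1 - p i) ^ Nstar i - p j * (1 - p j) ^ (Nstar j - 1) ∧
    (p i * (1 - p i) ^ Nstar i > p j * (1 - p j) ^ (Nstar j - 1) →
      (∑ k, Ntilde k = ∑ k, Nstar k) ∧
      coverJ Nstar p < coverJ Ntilde p ∧
      ¬ (∀ N : Fin M → ℕ, ∑ k, N k = ∑ k, Nstar k → coverJ N p ≤ coverJ Nstar p)) := by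
  have hNi : Ntilde i = Nstar i + 1 := by rw [hNtilde]; simp
  have hNj' : Ntilde j = Nstar j - 1 := by rw [hNtilde]; simp [hij.symm]
  have hNk : ∀ k, k ≠ i → k ≠ j → Ntilde k = Nstar k := by
    intro k h1 h2; rw [hNtilde]; simp [h1, h2]
  have hjsucc : Nstar j = (Nstar j - 1) + 1 := (Nat.succ_pred_eq_of_pos hNj).symm
  have key : coverJ Ntilde p - coverJ Nstar p =
      p i * (1 - p i) ^ Nstar i - p j * (1 - p j) ^ (Nstar j - 1) := by
    unfold coverJ
    rw [← Finset.sum_sub_distrib]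
    have hsub : ({i, j} : Finset (Fin M)) ⊆ Finset.univ := Finset.subset_univ _
    rw [← Finset.sum_subset hsub (by
      intro k _ hk
      simp only [Finset.mem_insert, Finset.mem_singleton, not_or] at hk
      rw [hNk k hk.1 hk.2]; ring)]
    rw [Finset.sum_pair hij, hNi, hNj']
    rw [show Nstar j = (Nstar j - 1) + 1 from hjsucc]
    simp only [Nat.add_sub_cancel]
    ring
  refine ⟨key, fun hgt => ?_⟩
  have hsum : ∑ k, Ntilde k = ∑ k, Nstar k := by
    have : ∑ k, (Ntilde k : ℤ) - ∑ k, (Nstar k : ℤ) = 0 := by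
      rw [← Finset.sum_sub_distrib]
      have hsub : ({i, j} : Finset (Fin M)) ⊆ Finset.univ := Finset.subset_univ _
      rw [← Finset.sum_subset hsub (by
        intro k _ hk
        simp only [Finset.mem_insert, Finset.mem_singleton, not_or] at hk
        rw [hNk k hk.1 hk.2]; ring)]
      rw [Finset.sum_pair hij, hNi, hNj', hjsucc]
      push_cast
      ring
    have h2 : ((∑ k, Ntilde k : ℕ) : ℤ) = ((∑ k, Nstar k : ℕ) : ℤ) := by
      push_cast
      linarith
    exact_mod_cast h2
  have hlt : coverJ Nstar p < coverJ Ntilde p := by linarith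
  exact ⟨hsum, hlt, fun h => absurd (h Ntilde hsum) (not_le.mpr hlt)⟩
end

section
/- Let p ∈ [0,1], let λ be a real number, and let n* be a natural number. Suppose Δ(p, k) ≤ λ for every natural number k ≥ n*, and Δ(p, k) ≥ λ for every natural number k < n*, where Δ(p, k) = p·(1-p)^k. Then for every natural number n, f(p, n) - f(p, n*) ≤ λ·(n - n*), where f(p, m) = 1 - (1-p)^m and the right-hand side is interpreted as a difference of integers multiplied by λ. -/
lemma coverage_tel (p : ℝ) : ∀ a b : ℕ, a ≤ b →
    (1 - p) ^ a - (1 - p) ^ b = ∑ k ∈ Finset.Ico a b, p * (1 - p) ^ k := by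
  intro a b hab
  induction b, hab using Nat.le_induction with
  | base => simp
  | succ b hab ih =>
    rw [Finset.sum_Ico_succ_top hab, ← ih, pow_succ]
    ring

/-- KKT per-question bound: if `Δ(p,k) ≤ λ` for all `k ≥ n*` and
`Δ(p,k) ≥ λ` for all `k < n*`, then for every `n`,
`f(p,n) - f(p,n*) ≤ λ·(n - n*)`, where `f(p,m) = 1 - (1-p)^m` and
`Δ(p,k) = p·(1-p)^k`, and `n - n*` is the difference of integers. -/
theorem coverage_kkt_bound (p : ℝ) (hp0 : 0 ≤ p) (hp1 : p ≤ 1)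
    (lam : ℝ) (nstar : ℕ)
    (hUp : ∀ k : ℕ, nstar ≤ k → p * (1 - p) ^ k ≤ lam)
    (hLow : ∀ k : ℕ, k < nstar → lam ≤ p * (1 - p) ^ k) :
    ∀ n : ℕ, (1 - (1 - p) ^ n) - (1 - (1 - p) ^ nstar) ≤
      lam * ((n : ℝ) - (nstar : ℝ)) := by
  intro n
  rcases le_or_gt nstar n with h | h
  · have key : (1 - (1 - p) ^ n) - (1 - (1 - p) ^ nstar)
        = ∑ k ∈ Finset.Ico nstar n, p * (1 - p) ^ k := by
      rw [← coverage_tel p nstar n h]; ring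
    rw [key]
    calc ∑ k ∈ Finset.Ico nstar n, p * (1 - p) ^ k
        ≤ ∑ k ∈ Finset.Ico nstar n, lam := by
          apply Finset.sum_le_sum
          intro k hk
          exact hUp k (Finset.mem_Ico.mp hk).1
      _ = lam * ((n : ℝ) - (nstar : ℝ)) := by
          rw [Finset.sum_const, Nat.card_Ico, nsmul_eq_mul, Nat.cast_sub h]
          ring
  · have key : (1 - (1 - p) ^ n) - (1 - (1 - p) ^ nstar)
        = -∑ k ∈ Finset.Ico n nstar, p * (1 - p) ^ k := by
      rw [← coverage_tel p n nstar h.le]; ring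
    rw [key]
    have : lam * ((nstar : ℝ) - (n : ℝ)) ≤ ∑ k ∈ Finset.Ico n nstar, p * (1 - p) ^ k := by
      calc lam * ((nstar : ℝ) - (n : ℝ))
          = ∑ k ∈ Finset.Ico n nstar, lam := by
            rw [Finset.sum_const, Nat.card_Ico, nsmul_eq_mul, Nat.cast_sub h.le]
            ring
        _ ≤ _ := by
            apply Finset.sum_le_sum
            intro k hk
            exact hLow k (Finset.mem_Ico.mp hk).2
    linarith
end

section
/- (KKT sufficiency for the concave coverage knapsack.) Let M ≥ 1 and B be natural numbers, let p ∈ [0,1]^M, and let N* = (N*_1, …, N*_M) be an allocation of natural numbers feasible for budget B. Suppose there exists a real number λ* such that for every index i: Δ(p_i, N*_i) ≤ λ*, and additionally Δ(p_i, N*_i - 1) ≥ λ* whenever N*_i ≥ 1, where Δ(p, n) = p·(1-p)^n. Then N* maximizes the coverage objective J(·; p) over all allocations feasible for budget B: J(N*; p) ≥ J(N; p) for every allocation N of natural numbers with Σ_i N_i = B. -/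
open Finset

lemma keyA (p lam : ℝ) (hp0 : 0 ≤ p) (hp1 : p ≤ 1) (m : ℕ)
    (hUp : p * (1 - p) ^ m ≤ lam) :
    ∀ d : ℕ, (1 - p) ^ m - (1 - p) ^ (m + d) ≤ lam * d := by
  have hq0 : (0:ℝ) ≤ 1 - p := by linarith
  have hq1 : (1:ℝ) - p ≤ 1 := by linarith
  intro d
  induction d with
  | zero => simp
  | succ d ih =>
    have h1 : (1 - p) ^ (m + (d+1)) = (1 - p) ^ (m + d) * (1 - p) := by ring
    have h2 : (1 - p) ^ (m + d) - (1 - p) ^ (m + d) * (1 - p)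
        = p * (1 - p) ^ (m + d) := by ring
    have h3 : (1 - p) ^ (m + d) ≤ (1 - p) ^ m :=
      pow_le_pow_of_le_one hq0 hq1 (Nat.le_add_right m d)
    have h4 : p * (1 - p) ^ (m + d) ≤ lam := by nlinarith
    push_cast
    nlinarith

lemma keyB (p lam : ℝ) (hp0 : 0 ≤ p) (hp1 : p ≤ 1) (m : ℕ)
    (hLow : 1 ≤ m → lam ≤ p * (1 - p) ^ (m - 1)) :
    ∀ d : ℕ, d ≤ m → lam * d ≤ (1 - p) ^ (m - d) - (1 - p) ^ m := by
  have hq0 : (0:ℝ) ≤ 1 - p := by linarith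
  have hq1 : (1:ℝ) - p ≤ 1 := by linarith
  intro d
  induction d with
  | zero => simp
  | succ d ih =>
    intro hdm
    have hd : d ≤ m := Nat.le_of_succ_le hdm
    have hm1 : 1 ≤ m := Nat.one_le_of_lt (Nat.lt_of_lt_of_le (Nat.lt_succ_self d) hdm)
    have ih' := ih hd
    have hexp : m - d = (m - (d+1)) + 1 := by omega
    have h1 : (1 - p) ^ (m - d) = (1 - p) ^ (m - (d+1)) * (1 - p) := by
      rw [hexp, pow_succ]
    have h2 : (1 - p) ^ (m - (d+1)) - (1 - p) ^ (m - (d+1)) * (1 - p)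
        = p * (1 - p) ^ (m - (d+1)) := by ring
    have h3 : (1 - p) ^ (m - 1) ≤ (1 - p) ^ (m - (d+1)) :=
      pow_le_pow_of_le_one hq0 hq1 (by omega)
    have h4 : lam ≤ p * (1 - p) ^ (m - (d+1)) := by
      have := hLow hm1
      nlinarith
    push_cast
    nlinarith

lemma key (p lam : ℝ) (hp0 : 0 ≤ p) (hp1 : p ≤ 1) (m n : ℕ)
    (hUp : p * (1 - p) ^ m ≤ lam)
    (hLow : 1 ≤ m → lam ≤ p * (1 - p) ^ (m - 1)) :
    (1 - (1 - p) ^ n) - (1 - (1 - p) ^ m) ≤ lam * ((n:ℝ) - (m:ℝ)) := by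
  rcases le_or_gt m n with h | h
  · obtain ⟨d, rfl⟩ := Nat.exists_eq_add_of_le h
    have := keyA p lam hp0 hp1 m hUp d
    push_cast
    linarith
  · have hle : n ≤ m := le_of_lt h
    obtain ⟨d, hd⟩ := Nat.exists_eq_add_of_le hle
    have hdm : d ≤ m := by omega
    have := keyB p lam hp0 hp1 m hLow d hdm
    have hmd : m - d = n := by omega
    rw [hmd, hd] at this
    rw [hd]
    push_cast
    linarith

/-- KKT sufficiency for the concave coverage knapsack: if there is a price `λ*`
with `Δ(p_i, N*_i) ≤ λ*` for every `i`, and `Δ(p_i, N*_i - 1) ≥ λ*` whenever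
`N*_i ≥ 1`, then the feasible allocation `N*` maximizes `J(·; p)` over all
allocations with total budget `B`. -/
theorem coverJ_kkt_sufficient (M B : ℕ) (hM : 1 ≤ M)
    (p : Fin M → ℝ) (hp0 : ∀ i, 0 ≤ p i) (hp1 : ∀ i, p i ≤ 1)
    (Nstar : Fin M → ℕ) (hNstarB : ∑ i, Nstar i = B)
    (lam : ℝ)
    (hUp : ∀ i, p i * (1 - p i) ^ Nstar i ≤ lam)
    (hLow : ∀ i, 1 ≤ Nstar i → lam ≤ p i * (1 - p i) ^ (Nstar i - 1)) :
    ∀ N : Fin M → ℕ, ∑ i, N i = B → coverJ N p ≤ coverJ Nstar p := by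
  intro N hNB
  have hsum : coverJ N p - coverJ Nstar p
      = ∑ i, ((1 - (1 - p i) ^ N i) - (1 - (1 - p i) ^ Nstar i)) := by
    rw [coverJ, coverJ, ← Finset.sum_sub_distrib]
  have hbound : ∑ i, ((1 - (1 - p i) ^ N i) - (1 - (1 - p i) ^ Nstar i))
      ≤ ∑ i, lam * ((N i : ℝ) - (Nstar i : ℝ)) := by
    apply Finset.sum_le_sum
    intro i _
    exact key (p i) lam (hp0 i) (hp1 i) (Nstar i) (N i) (hUp i) (hLow i)
  have hzero : ∑ i, lam * ((N i : ℝ) - (Nstar i : ℝ)) = 0 := by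
    rw [← Finset.mul_sum, Finset.sum_sub_distrib]
    have h1 : ∑ i, (N i : ℝ) = (B : ℝ) := by exact_mod_cast congrArg Nat.cast hNB
    have h2 : ∑ i, (Nstar i : ℝ) = (B : ℝ) := by exact_mod_cast congrArg Nat.cast hNstarB
    rw [h1, h2]; ring
  linarith
end

section
/- (KKT necessity for the concave coverage knapsack.) Let M ≥ 1 and B be natural numbers, let p ∈ [0,1]^M, and let N* be an allocation of natural numbers feasible for budget B that maximizes the coverage objective J(·; p) over all allocations feasible for budget B. Then for all indices i, j with N*_j ≥ 1, it holds that Δ(p_i, N*_i) ≤ Δ(p_j, N*_j - 1), where Δ(p, n) = p·(1-p)^n. Equivalently, there exists a real number λ* such that Δ(p_i, N*_i) ≤ λ* for every i, and Δ(p_i, N*_i - 1) ≥ λ* whenever N*_i ≥ 1. -/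
open Finset

/-- KKT necessity for the concave coverage knapsack: if the feasible allocation
`N*` maximizes `J(·; p)` over all allocations with total budget `B`, then
`Δ(p_i, N*_i) ≤ Δ(p_j, N*_j - 1)` whenever `N*_j ≥ 1`; equivalently, there is a
price `λ*` with `Δ(p_i, N*_i) ≤ λ*` for all `i` and `Δ(p_i, N*_i - 1) ≥ λ*`
whenever `N*_i ≥ 1`. -/
theorem coverJ_kkt_necessary (M B : ℕ) (hM : 1 ≤ M)
    (p : Fin M → ℝ) (hp0 : ∀ i, 0 ≤ p i) (hp1 : ∀ i, p i ≤ 1)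
    (Nstar : Fin M → ℕ) (hNstarB : ∑ i, Nstar i = B)
    (hOpt : ∀ N : Fin M → ℕ, ∑ i, N i = B → coverJ N p ≤ coverJ Nstar p) :
    (∀ i j : Fin M, 1 ≤ Nstar j →
      p i * (1 - p i) ^ Nstar i ≤ p j * (1 - p j) ^ (Nstar j - 1)) ∧
    (∃ lam : ℝ,
      (∀ i, p i * (1 - p i) ^ Nstar i ≤ lam) ∧
      (∀ i, 1 ≤ Nstar i → lam ≤ p i * (1 - p i) ^ (Nstar i - 1))) := by
  have key : ∀ i j : Fin M, 1 ≤ Nstar j →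
      p i * (1 - p i) ^ Nstar i ≤ p j * (1 - p j) ^ (Nstar j - 1) := by
    intro i j hj
    obtain ⟨m, hm⟩ : ∃ m, Nstar j = m + 1 := ⟨Nstar j - 1, by omega⟩
    have hm1 : Nstar j - 1 = m := by omega
    by_cases hij : i = j
    · subst hij
      have hq0 : (0:ℝ) ≤ 1 - p i := by linarith [hp1 i]
      have hq1 : (1:ℝ) - p i ≤ 1 := by linarith [hp0 i]
      have hpow : (1 - p i) ^ Nstar i ≤ (1 - p i) ^ (Nstar i - 1) :=
        pow_le_pow_of_le_one hq0 hq1 (Nat.sub_le _ _)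
      exact mul_le_mul_of_nonneg_left hpow (hp0 i)
    · set N' : Fin M → ℕ := fun k => if k = i then Nstar i + 1
        else if k = j then Nstar j - 1 else Nstar k with hN'
      have hNi : N' i = Nstar i + 1 := by simp [hN']
      have hNj : N' j = Nstar j - 1 := by simp [hN', Ne.symm hij]
      have hrest : ∀ k, k ≠ i → k ≠ j → N' k = Nstar k := by
        intro k h1 h2; simp [hN', h1, h2]
      have hjmem : j ∈ (univ : Finset (Fin M)).erase i :=
        Finset.mem_erase.mpr ⟨Ne.symm hij, mem_univ j⟩
      have hrestsum : ∑ k ∈ ((univ : Finset (Fin M)).erase i).erase j, N' k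
          = ∑ k ∈ ((univ : Finset (Fin M)).erase i).erase j, Nstar k := by
        apply Finset.sum_congr rfl
        intro k hk
        have hk2 := Finset.mem_erase.mp hk
        have hk3 := Finset.mem_erase.mp hk2.2
        exact hrest k hk3.1 hk2.1
      have hsplit : ∀ f : Fin M → ℕ,
          ∑ k, f k = f i + (f j + ∑ k ∈ ((univ : Finset (Fin M)).erase i).erase j, f k) := by
        intro f
        rw [← Finset.add_sum_erase _ f (mem_univ i), ← Finset.add_sum_erase _ f hjmem]
      have hsum : ∑ k, N' k = B := by
        rw [hsplit N', hNi, hNj, hrestsum, ← hNstarB, hsplit Nstar]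
        omega
      have hopt := hOpt N' hsum
      have hdiff : ∑ k, ((1 - p k) ^ Nstar k - (1 - p k) ^ N' k) ≤ 0 := by
        have h := sub_nonpos.mpr hopt
        unfold coverJ at h
        rw [← Finset.sum_sub_distrib] at h
        convert h using 2 with k
        ring
      have hzero : ∀ k, k ≠ i ∧ k ≠ j →
          ((1 - p k) ^ Nstar k - (1 - p k) ^ N' k) = 0 := by
        intro k ⟨h1, h2⟩
        rw [hrest k h1 h2]; ring
      rw [Fintype.sum_eq_add i j hij hzero, hNi, hNj, hm1, hm] at hdiff
      have : (1 - p i) ^ Nstar i - (1 - p i) ^ (Nstar i + 1)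
          + ((1 - p j) ^ (m + 1) - (1 - p j) ^ m)
          = p i * (1 - p i) ^ Nstar i - p j * (1 - p j) ^ m := by
        ring
      rw [this] at hdiff
      rw [hm1]
      linarith
  refine ⟨key, ?_⟩
  have : Nonempty (Fin M) := ⟨⟨0, hM⟩⟩
  refine ⟨(univ : Finset (Fin M)).sup' Finset.univ_nonempty
    (fun i => p i * (1 - p i) ^ Nstar i), ?_, ?_⟩
  · intro i; exact Finset.le_sup' (fun i => p i * (1 - p i) ^ Nstar i) (mem_univ i)
  · intro j hj
    exact Finset.sup'_le _ _ (fun i _ => key i j hj)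
end

section
/- (Exactness of marginal-greedy allocation.) Let M ≥ 1 and B be natural numbers and let p ∈ [0,1]^M. Let (e^{(0)}, e^{(1)}, …, e^{(B)}) be a sequence of allocations of natural numbers such that e^{(0)} = (0, …, 0) and, for each step t with 1 ≤ t ≤ B, the allocation e^{(t)} is obtained from e^{(t-1)} by adding 1 to a single coordinate i*_t that maximizes the marginal gain Δ(p_i, e^{(t-1)}_i) = p_i·(1-p_i)^{e^{(t-1)}_i} over all indices i. Then the final allocation e^{(B)} is feasible for budget B and maximizes the coverage objective: J(e^{(B)}; p) ≥ J(N; p) for every allocation N of natural numbers with Σ_{i=1}^M N_i = B. -/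
open Finset

lemma sum_erase_update {M : ℕ} {α : Type*} [AddCommMonoid α] (g : Fin M → ℕ → α)
    (f : Fin M → ℕ) (j : Fin M) (v : ℕ) :
    ∑ i ∈ Finset.univ.erase j, g i (Function.update f j v i)
      = ∑ i ∈ Finset.univ.erase j, g i (f i) :=
  Finset.sum_congr rfl fun i hi => by
    rw [Function.update_of_ne (Finset.mem_erase.mp hi).1]

lemma sum_update_eq {M : ℕ} {α : Type*} [AddCommMonoid α] (g : Fin M → ℕ → α)
    (f : Fin M → ℕ) (j : Fin M) (v : ℕ) :
    ∑ i, g i (Function.update f j v i)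
      = g j v + ∑ i ∈ Finset.univ.erase j, g i (f i) := by
  rw [← Finset.add_sum_erase Finset.univ (fun i => g i (Function.update f j v i))
    (Finset.mem_univ j), sum_erase_update, Function.update_self]

lemma coverJ_update {M : ℕ} (N : Fin M → ℕ) (p : Fin M → ℝ) (j : Fin M) (v : ℕ) :
    coverJ (Function.update N j v) p
      = coverJ N p - (1 - (1 - p j) ^ N j) + (1 - (1 - p j) ^ v) := by
  unfold coverJ
  rw [sum_update_eq (fun i n => 1 - (1 - p i) ^ n) N j v,
    ← Finset.add_sum_erase Finset.univ (fun i => 1 - (1 - p i) ^ N i) (Finset.mem_univ j)]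
  ring

lemma coverJ_update_succ {M : ℕ} (N : Fin M → ℕ) (p : Fin M → ℝ) (j : Fin M) :
    coverJ (Function.update N j (N j + 1)) p
      = coverJ N p + p j * (1 - p j) ^ N j := by
  rw [coverJ_update]
  rw [pow_succ]
  ring

lemma coverJ_update_pred {M : ℕ} (N : Fin M → ℕ) (p : Fin M → ℝ) (j : Fin M)
    (h : 1 ≤ N j) :
    coverJ N p
      = coverJ (Function.update N j (N j - 1)) p + p j * (1 - p j) ^ (N j - 1) := by
  rw [coverJ_update]
  obtain ⟨m, hm⟩ : ∃ m, N j = m + 1 := ⟨N j - 1, by omega⟩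
  rw [hm]
  simp only [Nat.add_sub_cancel]
  rw [pow_succ]
  ring

/-- Exactness of marginal-greedy allocation: if `e⁰ = 0` and each step `t < B`
adds one unit to a coordinate maximizing the marginal gain
`Δ(p_i, eᵗ_i) = p_i·(1-p_i)^{eᵗ_i}`, then the final allocation `e^B` is feasible
for budget `B` and maximizes the coverage objective over all feasible
allocations. -/
theorem coverJ_greedy_exact (M B : ℕ) (hM : 1 ≤ M)
    (p : Fin M → ℝ) (hp0 : ∀ i, 0 ≤ p i) (hp1 : ∀ i, p i ≤ 1)
    (e : ℕ → Fin M → ℕ)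
    (h0 : e 0 = fun _ => 0)
    (hstep : ∀ t : ℕ, t < B → ∃ istar : Fin M,
      (∀ i : Fin M, p i * (1 - p i) ^ e t i ≤ p istar * (1 - p istar) ^ e t istar) ∧
      e (t + 1) = Function.update (e t) istar (e t istar + 1)) :
    (∑ i, e B i = B) ∧
    (∀ N : Fin M → ℕ, ∑ i, N i = B → coverJ N p ≤ coverJ (e B) p) := by
  have key : ∀ t, t ≤ B → (∑ i, e t i = t) ∧
      (∀ N : Fin M → ℕ, ∑ i, N i = t → coverJ N p ≤ coverJ (e t) p) := by
    intro t
    induction t with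
    | zero =>
      intro _
      constructor
      · simp [h0]
      · intro N hN
        have hz : ∀ i, N i = 0 := by
          intro i
          have := Finset.sum_eq_zero_iff.mp hN
          exact this i (Finset.mem_univ i)
        unfold coverJ
        simp [h0, hz]
    | succ t ih =>
      intro ht
      have ht' : t < B := ht
      obtain ⟨hsum, hopt⟩ := ih (le_of_lt ht')
      obtain ⟨istar, hmax, hupd⟩ := hstep t ht'
      have hsum' : ∑ i, e (t + 1) i = t + 1 := by
        rw [hupd, sum_update_eq (fun _ n => n) (e t) istar (e t istar + 1)]
        rw [← Finset.add_sum_erase Finset.univ (e t) (Finset.mem_univ istar)] at hsum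
        omega
      refine ⟨hsum', ?_⟩
      intro N hN
      -- find j with e t j < N j
      have hj : ∃ j, e t j < N j := by
        by_contra h
        push_neg at h
        have : ∑ i, N i ≤ ∑ i, e t i := Finset.sum_le_sum fun i _ => h i
        omega
      obtain ⟨j, hj⟩ := hj
      set N' := Function.update N j (N j - 1) with hN'
      have hsumN' : ∑ i, N' i = t := by
        rw [hN', sum_update_eq (fun _ n => n) N j (N j - 1)]
        rw [← Finset.add_sum_erase Finset.univ N (Finset.mem_univ j)] at hN
        omega
      have h1 : coverJ N p = coverJ N' p + p j * (1 - p j) ^ (N j - 1) :=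
        coverJ_update_pred N p j (by omega)
      have h2 : coverJ N' p ≤ coverJ (e t) p := hopt N' hsumN'
      have h3 : p j * (1 - p j) ^ (N j - 1) ≤ p j * (1 - p j) ^ (e t j) := by
        apply mul_le_mul_of_nonneg_left _ (hp0 j)
        apply pow_le_pow_of_le_one (by linarith [hp1 j]) (by linarith [hp0 j]) (by omega)
      have h4 : p j * (1 - p j) ^ (e t j) ≤ p istar * (1 - p istar) ^ (e t istar) :=
        hmax j
      have h5 : coverJ (e (t + 1)) p
          = coverJ (e t) p + p istar * (1 - p istar) ^ (e t istar) := by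
        rw [hupd]; exact coverJ_update_succ (e t) p istar
      linarith
  exact key B le_rfl
end
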